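/- Let 𝔉 be a filter on TP[0,1]. The following are equivalent: (1) there exists an unbounded function f : [0,1] → [0,∞) such that (Π,T) ↦ S(f,Π,T) is 𝔉-bounded; (2) there exists a countable subset {tₙ}ₙ∈ℕ of [0,1] and a set A ∈ 𝔉 such that Σₙ n·ℓ(Π,T,tₙ) < 1 for every (Π,T) ∈ A. -/

import Mathlib

open Filter Topology

/-- A tagged partition of the segment `[a, b]`:
points `a = ξ₀ ≤ ξ₁ ≤ ... ≤ ξₙ = b` together with tags `tₖ ∈ [ξₖ₋₁, ξₖ]`. -/
structure TaggedPartition (a b : ℝ) where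
  n : ℕ
  pts : Fin (n + 1) → ℝ
  mono : Monotone pts
  first : pts 0 = a
  last : pts (Fin.last n) = b
  tag : Fin n → ℝ
  tag_ge : ∀ k : Fin n, pts k.castSucc ≤ tag k
  tag_le : ∀ k : Fin n, tag k ≤ pts k.succ

namespace TaggedPartition

variable {a b : ℝ}

/-- Length `Δₖ = ξₖ - ξₖ₋₁` of the `k`-th subinterval. -/
def len (P : TaggedPartition a b) (k : Fin P.n) : ℝ :=
  P.pts k.succ - P.pts k.castSucc

/-- Riemann sum `S(f, Π, T) = Σₖ f(tₖ)·Δₖ`. -/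
def RS (f : ℝ → ℝ) (P : TaggedPartition a b) : ℝ :=
  ∑ k, f (P.tag k) * P.len k

/-- `d(Π) < δ`: every subinterval has length `< δ`. -/
def diamLT (P : TaggedPartition a b) (δ : ℝ) : Prop :=
  ∀ k : Fin P.n, P.len k < δ

/-- `ℓ(Π, T, τ)`: total length of the subintervals whose tag is `τ`
(`0` if `τ` is not a tag). -/
noncomputable def tagLen (P : TaggedPartition a b) (τ : ℝ) : ℝ :=
  ∑ k ∈ Finset.univ.filter (fun k => P.tag k = τ), P.len k

/-- The (finite) set of tags of a tagged partition. -/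
noncomputable def tagSet (P : TaggedPartition a b) : Finset ℝ :=
  Finset.image P.tag Finset.univ

/-- The distance
`ρ((Π₁,T₁),(Π₂,T₂)) = Σ_{t∈T₁∩T₂}|Δ₁(t)−Δ₂(t)| + Σ_{t∈T₁∖T₂}Δ₁(t) + Σ_{t∈T₂∖T₁}Δ₂(t)`. -/
noncomputable def ρ (P Q : TaggedPartition a b) : ℝ :=
  ∑ τ ∈ P.tagSet ∩ Q.tagSet, |P.tagLen τ - Q.tagLen τ|
    + ∑ τ ∈ P.tagSet \ Q.tagSet, P.tagLen τ
    + ∑ τ ∈ Q.tagSet \ P.tagSet, Q.tagLen τ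

end TaggedPartition

/-- Tagged partitions of `[0,1]`. -/
abbrev TP01 := TaggedPartition 0 1

/-- The filter `𝔉_{<δ}` on `TP[0,1]` generated by the base
`P_{<δ} = {(Π,T) : d(Π) < δ}`, `δ > 0`; convergence of Riemann sums along it
is Riemann integrability. -/
noncomputable def riemannFilter : Filter TP01 :=
  ⨅ δ ∈ Set.Ioi (0 : ℝ), Filter.principal {P : TP01 | P.diamLT δ}

/-- `𝔉₂` ρ-dominates `𝔉₁`. -/
def RhoDominates (F₂ F₁ : Filter TP01) : Prop :=
  ∀ ε > (0:ℝ), ∀ A₁ ∈ F₁, ∃ A₂ ∈ F₂, ∀ Q ∈ A₂, ∃ P ∈ A₁, TaggedPartition.ρ P Q < ε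

/-!
Since `S(f, Π, T) = Σ_τ f(τ)·ℓ(Π, T, τ)` over the finitely many tags, both directions compare
`Σₙ n·ℓ(Π, T, tₙ)` with a Riemann sum. If `f ≥ 0` is unbounded and `S(f, ·) < C` on `A ∈ 𝔉`,
pick distinct points `tₙ ∈ [0,1]` with `f(tₙ) > C·n`; then
`C·Σₙ n·ℓ(tₙ) ≤ Σₙ f(tₙ)·ℓ(tₙ) ≤ S(f, Π, T) < C`. Conversely, given distinct `tₙ`, the function
equal to `n` at `tₙ` and `0` elsewhere is unbounded and its Riemann sums are exactly
`Σₙ n·ℓ(Π, T, tₙ) < 1` on `A`.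
-/

namespace TaggedPartition

variable {a b : ℝ} (P : TaggedPartition a b)

theorem len_nonneg (k : Fin P.n) : 0 ≤ P.len k :=
  sub_nonneg.2 (P.mono (Fin.castSucc_le_succ k))

theorem tagLen_nonneg (τ : ℝ) : 0 ≤ P.tagLen τ :=
  Finset.sum_nonneg fun k _ => P.len_nonneg k

theorem tagLen_eq_zero_of_notMem {τ : ℝ} (hτ : τ ∉ P.tagSet) : P.tagLen τ = 0 :=
  Finset.sum_eq_zero fun k hk =>
    absurd (Finset.mem_image.2 ⟨k, Finset.mem_univ k, (Finset.mem_filter.1 hk).2⟩) hτ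

theorem RS_nonneg {f : ℝ → ℝ} (hf : ∀ x, 0 ≤ f x) : 0 ≤ P.RS f :=
  Finset.sum_nonneg fun k _ => mul_nonneg (hf _) (P.len_nonneg k)

theorem RS_eq_sum_tagSet (f : ℝ → ℝ) : P.RS f = ∑ τ ∈ P.tagSet, f τ * P.tagLen τ := by
  classical
  rw [RS, ← Finset.sum_fiberwise_of_maps_to (g := P.tag) (t := P.tagSet)
    fun k _ => Finset.mem_image_of_mem _ (Finset.mem_univ k)]
  refine Finset.sum_congr rfl fun τ _ => ?_
  rw [tagLen, Finset.mul_sum]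
  exact Finset.sum_congr rfl fun k hk => by rw [(Finset.mem_filter.1 hk).2]

theorem RS_eq_tsum (f : ℝ → ℝ) : P.RS f = ∑' τ, f τ * P.tagLen τ :=
  (P.RS_eq_sum_tagSet f).trans
    (tsum_eq_sum fun τ hτ => by rw [P.tagLen_eq_zero_of_notMem hτ, mul_zero]).symm

theorem summable_mul_tagLen_comp {ι : Type*} {t : ι → ℝ} (ht : Function.Injective t)
    (u : ι → ℝ) : Summable fun i => u i * P.tagLen (t i) :=
  summable_of_ne_finset_zero (s := P.tagSet.preimage t ht.injOn) fun i hi => by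
    rw [P.tagLen_eq_zero_of_notMem (Finset.mem_preimage.not.1 hi), mul_zero]

theorem tsum_comp_mul_tagLen_le_RS {f : ℝ → ℝ} (hf : ∀ x, 0 ≤ f x) {ι : Type*} {t : ι → ℝ}
    (ht : Function.Injective t) : ∑' i, f (t i) * P.tagLen (t i) ≤ P.RS f := by
  rw [P.RS_eq_tsum]
  exact tsum_comp_le_tsum_of_inj (P.summable_mul_tagLen_comp Function.injective_id f)
    (fun τ => mul_nonneg (hf τ) (P.tagLen_nonneg τ)) ht

theorem RS_extend_zero {ι : Type*} {t : ι → ℝ} (ht : Function.Injective t) (g : ι → ℝ) :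
    P.RS (Function.extend t g 0) = ∑' i, g i * P.tagLen (t i) := by
  have h_support : Function.support (fun τ => Function.extend t g 0 τ * P.tagLen τ) ⊆
      Set.range t := Function.support_subset_iff'.2 fun τ hτ => by
    rw [Function.extend_apply' _ _ _ hτ, Pi.zero_apply, zero_mul]
  simp only [P.RS_eq_tsum, ← ht.tsum_eq h_support, ht.extend_apply]

end TaggedPartition

theorem exists_injective_seq_lt_of_forall_exists_lt {α : Type*} {s : Set α} {g : α → ℝ}
    (hg : ∀ C, ∃ x ∈ s, C < g x) (B : ℕ → ℝ) :
    ∃ x : ℕ → α, Function.Injective x ∧ ∀ n, x n ∈ s ∧ B n < g (x n) := by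
  choose y hys hyg using hg
  -- each new point also beats the previous one, so `g ∘ x` is strictly increasing
  let x : ℕ → α := fun n => Nat.rec (y (B 0)) (fun n xn => y (max (B (n + 1)) (g xn))) n
  have hx_succ : ∀ n, max (B (n + 1)) (g (x n)) < g (x (n + 1)) := fun n => hyg _
  have hg_mono : StrictMono (g ∘ x) :=
    strictMono_nat_of_lt_succ fun n => (le_max_right _ _).trans_lt (hx_succ n)
  refine ⟨x, hg_mono.injective.of_comp, fun n => ?_⟩
  cases n with
  | zero => exact ⟨hys _, hyg _⟩
  | succ n => exact ⟨hys _, (le_max_left _ _).trans_lt (hx_succ n)⟩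

theorem exists_injective_tsum_lt_one_of_RS_lt {a b C : ℝ} {s : Set ℝ} {f : ℝ → ℝ}
    (hf_nonneg : ∀ x, 0 ≤ f x) (hf_unbdd : ∀ C, ∃ x ∈ s, C < f x) (hC : 0 < C) :
    ∃ t : ℕ → ℝ, Function.Injective t ∧ (∀ n, t n ∈ s) ∧
      ∀ P : TaggedPartition a b, P.RS f < C → ∑' n : ℕ, (n : ℝ) * P.tagLen (t n) < 1 := by
  obtain ⟨t, ht, ht_mem⟩ := exists_injective_seq_lt_of_forall_exists_lt hf_unbdd (C * ·)
  refine ⟨t, ht, fun n => (ht_mem n).1, fun P hP => lt_of_mul_lt_mul_left ?_ hC.le⟩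
  calc C * ∑' n : ℕ, (n : ℝ) * P.tagLen (t n)
      = ∑' n : ℕ, C * n * P.tagLen (t n) := by simp only [← tsum_mul_left, mul_assoc]
    _ ≤ ∑' n, f (t n) * P.tagLen (t n) :=
        (P.summable_mul_tagLen_comp ht _).tsum_le_tsum
          (fun n => mul_le_mul_of_nonneg_right (ht_mem n).2.le (P.tagLen_nonneg _))
          (P.summable_mul_tagLen_comp ht _)
    _ ≤ P.RS f := P.tsum_comp_mul_tagLen_le_RS hf_nonneg ht
    _ < C * 1 := by rwa [mul_one]

/-- For a filter `𝔉` on `TP[0,1]`, there exists an unbounded nonnegative function whose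
Riemann sums are `𝔉`-bounded iff there is a countable set `{tₙ} ⊂ [0,1]` and `A ∈ 𝔉`
with `Σₙ n·ℓ(Π,T,tₙ) < 1` for all `(Π,T) ∈ A`. -/
theorem unbounded_with_bounded_sums_iff (F : Filter TP01) :
    (∃ f : ℝ → ℝ, (∀ t, 0 ≤ f t) ∧ (∀ C : ℝ, ∃ t ∈ Set.Icc (0:ℝ) 1, C < f t) ∧
      ∃ C > (0:ℝ), ∃ A ∈ F, ∀ P ∈ A, |TaggedPartition.RS f P| < C) ↔
    (∃ t : ℕ → ℝ, Function.Injective t ∧ (∀ n, t n ∈ Set.Icc (0:ℝ) 1) ∧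
      ∃ A ∈ F, ∀ P ∈ A, (∑' n : ℕ, (n:ℝ) * TaggedPartition.tagLen P (t n)) < 1) := by
  constructor
  · rintro ⟨f, hf_nonneg, hf_unbdd, C, hC, A, hA, hA_bdd⟩
    obtain ⟨t, ht, ht_mem, ht_sum⟩ :=
      exists_injective_tsum_lt_one_of_RS_lt (a := 0) (b := 1) hf_nonneg hf_unbdd hC
    exact ⟨t, ht, ht_mem, A, hA, fun P hP => ht_sum P ((le_abs_self _).trans_lt (hA_bdd P hP))⟩
  · rintro ⟨t, ht, ht_mem, A, hA, hA_sum⟩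
    have hf_nonneg : ∀ x, 0 ≤ Function.extend t (fun n : ℕ => (n : ℝ)) 0 x := fun x =>
      Function.extend_nonneg (f := t) (g := fun n : ℕ => (n : ℝ)) (e := 0)
        (fun n => n.cast_nonneg) le_rfl x
    refine ⟨_, hf_nonneg, fun C => ?_, 1, one_pos, A, hA, fun P hP => ?_⟩
    · obtain ⟨n, hn⟩ := exists_nat_gt C
      exact ⟨t n, ht_mem n, by rwa [ht.extend_apply]⟩
    · rw [abs_of_nonneg (P.RS_nonneg hf_nonneg), P.RS_extend_zero ht]
      exact hA_sum P hP
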